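/- arXiv:1405.3051 — 2 statements merged into one kernel-verified Lean document; each statement's English description precedes it below -/
import Mathlib

section
/- Let n ≥ 2 be even and let w = (1 2 ⋯ n) ∈ Sym(n). Then for both k = n/2 and k = n/2 − 1, the permutation y_k satisfies y_k² = 1, (w y_k)² = 1, w = (w y_k)·y_k, and ℓ(w y_k) + ℓ(y_k) − ℓ(w) = e(w); that is, (w y_{n/2}, y_{n/2}) and (w y_{n/2−1}, y_{n/2−1}) are both spartan pairs for w. -/
/-- The inversion number of a permutation of `{0, …, n−1}`, which equals the Coxeter
length of the permutation in `W(A_{n−1}) ≅ Sym(n)`. -/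
def invNum {n : ℕ} (σ : Equiv.Perm (Fin n)) : ℕ :=
  (Finset.univ.filter fun p : Fin n × Fin n => p.1 < p.2 ∧ σ p.2 < σ p.1).card

/-- The underlying function of `y_k`: `j ↦ k - 1 - j` for `j < k` and
`j ↦ n + k - 1 - j` for `k ≤ j < n` (the zero-indexed form of the permutation of
`{1, …, n}` sending `i ↦ k + 1 - i` for `1 ≤ i ≤ k` and `i ↦ n + k + 1 - i` for
`k + 1 ≤ i ≤ n`). -/
def ykFun (n k : ℕ) (hk : k ≤ n) (j : Fin n) : Fin n :=
  if _h : (j : ℕ) < k then ⟨k - 1 - j, by omega⟩ else ⟨n + k - 1 - j, by omega⟩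

lemma ykFun_involutive (n k : ℕ) (hk : k ≤ n) : Function.Involutive (ykFun n k hk) := by
  intro j
  unfold ykFun
  by_cases h1 : (j : ℕ) < k
  · rw [dif_pos h1, dif_pos (by simp; omega)]
    apply Fin.ext; simp; omega
  · rw [dif_neg h1, dif_neg (by simp; omega)]
    apply Fin.ext; simp; omega

/-- The involution `y_k` of Hart–Rowley, Proposition 2.8. -/
def yk (n k : ℕ) (hk : k ≤ n) : Equiv.Perm (Fin n) := (ykFun_involutive n k hk).toPerm


/-- The excess of a permutation `w`:
`e(w) = min{ℓ(x) + ℓ(y) − ℓ(w) : w = xy, x² = 1 = y²}`. -/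
noncomputable def excess {n : ℕ} (w : Equiv.Perm (Fin n)) : ℕ :=
  sInf {m : ℕ | ∃ x y : Equiv.Perm (Fin n), x ^ 2 = 1 ∧ y ^ 2 = 1 ∧ w = x * y ∧
    m = invNum x + invNum y - invNum w}

/-!
A factorization `w = x * y` of the rotation `w : j ↦ j + 1` of `Fin n ≅ ℤ/n` into involutions
has `x * w * x = w⁻¹`, so `x` is a reflection `j ↦ c - j`; hence the factorizations are exactly
the pairs `(y_{c+1}, y_c)`. Since `ℓ(y_k) = C(k, 2) + C(n - k, 2)` and
`C(a + 1, 2) + C(a, 2) = a²`, the length `ℓ(y_{c+1}) + ℓ(y_c)` equals `c² + (n - 1 - c)²`, a sum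
of two squares with fixed odd sum `n - 1`, minimal exactly when `c = n/2` or `c = n/2 - 1`.
-/

lemma yk_val (n k : ℕ) (hk : k ≤ n) (j : Fin n) :
    (yk n k hk j : ℕ) = if (j : ℕ) < k then k - 1 - j else n + k - 1 - j := by
  change (ykFun n k hk j : ℕ) = _
  unfold ykFun
  split <;> rfl

lemma yk_mul_self (n k : ℕ) (hk : k ≤ n) : yk n k hk * yk n k hk = 1 :=
  Equiv.ext (ykFun_involutive n k hk)

lemma yk_sq (n k : ℕ) (hk : k ≤ n) : yk n k hk ^ 2 = 1 := by
  rw [sq, yk_mul_self]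

lemma finRotate_mul_yk (n k : ℕ) (hk : k + 1 ≤ n) :
    finRotate n * yk n k (by omega) = yk n (k + 1) hk := by
  obtain ⟨m, rfl⟩ : ∃ m, n = m + 1 := ⟨n - 1, by omega⟩
  ext j
  simp only [Equiv.Perm.mul_apply, coe_finRotate, Fin.ext_iff, Fin.val_last, yk_val]
  split_ifs <;> omega

lemma yk_succ_mul_yk (n k : ℕ) (hk : k + 1 ≤ n) :
    yk n (k + 1) hk * yk n k (by omega) = finRotate n := by
  rw [← finRotate_mul_yk n k hk, mul_assoc, yk_mul_self, mul_one]

lemma yk_succ_apply (n c : ℕ) (hc : c < n) (j : Fin n) : yk n (c + 1) hc j = ⟨c, hc⟩ - j := by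
  ext
  rw [yk_val]
  split_ifs
  · rw [Fin.coe_sub_iff_le.mpr (Fin.le_def.mpr (by dsimp only; omega))]; simp
  · rw [Fin.coe_sub_iff_lt.mpr (Fin.lt_def.mpr (by dsimp only; omega))]; simp

open Fin.NatCast in
lemma exists_yk_of_finRotate_eq_mul {n : ℕ} [NeZero n] {x y : Equiv.Perm (Fin n)}
    (hx : x ^ 2 = 1) (hy : y ^ 2 = 1) (hw : finRotate n = x * y) :
    ∃ c : ℕ, ∃ hc : c < n, x = yk n (c + 1) hc ∧ y = yk n c hc.le := by
  have hy_eq : y = x * finRotate n := by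
    rw [hw, ← mul_assoc, ← sq, hx, one_mul]
  have hxx : ∀ u, x (x u) = u := fun u => by
    rw [← Equiv.Perm.mul_apply, ← sq, hx, Equiv.Perm.one_apply]
  -- `y = x * finRotate n` is an involution, so `x` conjugates `j ↦ j + 1` to `j ↦ j - 1`
  have hstep : ∀ j, x (j + 1) = x j - 1 := by
    intro j
    have h := DFunLike.congr_fun hy j
    rw [hy_eq, sq, Equiv.Perm.mul_apply, Equiv.Perm.mul_apply, Equiv.Perm.mul_apply] at h
    have h' := congr_arg x h
    rw [hxx, finRotate_apply, finRotate_apply] at h'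
    exact eq_sub_of_add_eq h'
  have hx_apply : ∀ v : ℕ, x v = x 0 - v := by
    intro v
    induction v with
    | zero => simp
    | succ v ih => rw [Nat.cast_succ, hstep, ih, sub_sub]
  have hxc : x = yk n ((x 0 : ℕ) + 1) (x 0).isLt := by
    ext1 j
    rw [yk_succ_apply, Fin.eta, ← Fin.cast_val_eq_self j, hx_apply, Fin.cast_val_eq_self]
  refine ⟨x 0, (x 0).isLt, hxc, ?_⟩
  calc y = x * finRotate n := hy_eq
    _ = x * (x * yk n (x 0) (x 0).isLt.le) := by rw [← yk_succ_mul_yk n _ (x 0).isLt, ← hxc]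
    _ = yk n (x 0) (x 0).isLt.le := by rw [← mul_assoc, ← sq, hx, one_mul]

lemma sum_range_sub_one_sub_eq_choose_two (k : ℕ) :
    ∑ i ∈ Finset.range k, (k - 1 - i) = k.choose 2 := by
  rw [Finset.sum_range_reflect (fun i => i) k, Finset.sum_range_id, Nat.choose_two_right]

lemma card_filter_lt_val_lt {n : ℕ} (a b : ℕ) (hb : b ≤ n) :
    (Finset.univ.filter fun j : Fin n => a < j ∧ (j : ℕ) < b).card = b - 1 - a := by
  rw [Finset.card_filter, Fin.sum_univ_eq_sum_range (fun j => if a < j ∧ j < b then 1 else 0),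
    ← Finset.card_filter]
  have : (Finset.range n).filter (fun j => a < j ∧ j < b) = Finset.Ioo a b := by
    ext j
    simp only [Finset.mem_filter, Finset.mem_range, Finset.mem_Ioo]
    omega
  rw [this, Nat.card_Ioo]
  omega

lemma invNum_eq_sum_card {n : ℕ} (σ : Equiv.Perm (Fin n)) :
    invNum σ = ∑ i, (Finset.univ.filter fun j => i < j ∧ σ j < σ i).card := by
  simp only [invNum, Finset.card_filter, Fintype.sum_prod_type]

lemma invNum_yk (n k : ℕ) (hk : k ≤ n) : invNum (yk n k hk) = k.choose 2 + (n - k).choose 2 := by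
  have hrow : ∀ i : Fin n,
      (Finset.univ.filter fun j => i < j ∧ yk n k hk j < yk n k hk i).card =
        (if (i : ℕ) < k then k else n) - 1 - i := by
    intro i
    rw [← card_filter_lt_val_lt _ _ (by split_ifs <;> omega)]
    congr 1
    ext j
    simp only [Finset.mem_filter, Finset.mem_univ, true_and, Fin.lt_def, yk_val]
    have := j.isLt
    split_ifs <;> omega
  obtain ⟨l, rfl⟩ : ∃ l, n = k + l := ⟨n - k, by omega⟩
  rw [invNum_eq_sum_card, Fintype.sum_congr _ _ hrow,
    Fin.sum_univ_eq_sum_range (fun i => (if i < k then k else k + l) - 1 - i),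
    Finset.sum_range_add, Nat.add_sub_cancel_left, ← sum_range_sub_one_sub_eq_choose_two,
    ← sum_range_sub_one_sub_eq_choose_two]
  congr 1
  · exact Finset.sum_congr rfl fun i hi => by rw [if_pos (Finset.mem_range.mp hi)]
  · exact Finset.sum_congr rfl fun i _ => by rw [if_neg (by omega)]; omega

lemma choose_two_succ_add_choose_two (a : ℕ) : (a + 1).choose 2 + a.choose 2 = a ^ 2 := by
  have h : ((a + 1).choose 2 + a.choose 2 : ℚ) = a ^ 2 := by
    push_cast [Nat.cast_choose_two]
    ring
  exact_mod_cast h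

lemma sq_add_sq_le_sq_add_sq_of_add_eq {m b c : ℕ} (h : b + c = 2 * m + 1) :
    (m + 1) ^ 2 + m ^ 2 ≤ b ^ 2 + c ^ 2 := by
  rcases le_or_gt (m + 1) b with hb | hb <;> nlinarith

lemma invNum_yk_succ_add_invNum_yk_le {n k c : ℕ} (hn : n = k + k) (hk : k + 1 ≤ n)
    (hc : c < n) :
    invNum (yk n (k + 1) hk) + invNum (yk n k (by omega)) ≤
      invNum (yk n (c + 1) hc) + invNum (yk n c hc.le) := by
  obtain ⟨j, rfl⟩ : ∃ j, k = j + 1 := ⟨k - 1, by omega⟩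
  obtain ⟨b, hb⟩ : ∃ b, n - c = b + 1 := ⟨n - c - 1, by omega⟩
  simp only [invNum_yk, show n - (j + 1 + 1) = j by omega, show n - (j + 1) = j + 1 by omega,
    show n - (c + 1) = b by omega, hb]
  have hmin := sq_add_sq_le_sq_add_sq_of_add_eq (m := j) (b := c) (c := b) (by omega)
  linarith [choose_two_succ_add_choose_two (j + 1), choose_two_succ_add_choose_two j,
    choose_two_succ_add_choose_two c, choose_two_succ_add_choose_two b]

lemma excess_eq_of_forall_le {n : ℕ} {w x₀ y₀ : Equiv.Perm (Fin n)} (hx₀ : x₀ ^ 2 = 1)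
    (hy₀ : y₀ ^ 2 = 1) (hw : w = x₀ * y₀)
    (hmin : ∀ x y : Equiv.Perm (Fin n), x ^ 2 = 1 → y ^ 2 = 1 → w = x * y →
      invNum x₀ + invNum y₀ ≤ invNum x + invNum y) :
    excess w = invNum x₀ + invNum y₀ - invNum w := by
  have hmem : invNum x₀ + invNum y₀ - invNum w ∈ {m : ℕ | ∃ x y : Equiv.Perm (Fin n),
      x ^ 2 = 1 ∧ y ^ 2 = 1 ∧ w = x * y ∧ m = invNum x + invNum y - invNum w} :=
    ⟨x₀, y₀, hx₀, hy₀, hw, rfl⟩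
  refine le_antisymm (Nat.sInf_le hmem) (le_csInf ⟨_, hmem⟩ ?_)
  rintro _ ⟨x, y, hx, hy, hxy, rfl⟩
  exact Nat.sub_le_sub_right (hmin x y hx hy hxy) _

lemma excess_finRotate {n k : ℕ} (hn : n = k + k) (hk : k + 1 ≤ n) :
    excess (finRotate n) = invNum (yk n (k + 1) hk) + invNum (yk n k (by omega)) -
      invNum (finRotate n) := by
  have : NeZero n := ⟨by omega⟩
  refine excess_eq_of_forall_le (yk_sq _ _ _) (yk_sq _ _ _) (yk_succ_mul_yk n k hk).symm ?_
  intro x y hx hy hw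
  obtain ⟨c, hc, rfl, rfl⟩ := exists_yk_of_finRotate_eq_mul hx hy hw
  exact invNum_yk_succ_add_invNum_yk_le hn hk hc

lemma finRotate_mul_yk_sq (n k : ℕ) (hk : k + 1 ≤ n) :
    (finRotate n * yk n k (by omega)) ^ 2 = 1 := by
  rw [finRotate_mul_yk n k hk, yk_sq]

lemma finRotate_eq_finRotate_mul_yk_mul_yk (n k : ℕ) (hk : k ≤ n) :
    finRotate n = finRotate n * yk n k hk * yk n k hk := by
  rw [mul_assoc, yk_mul_self, mul_one]

/-- **Hart–Rowley, Proposition 2.8(iii).** For even `n ≥ 2`, the pairs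
`(w y_k, y_k)` for both `k = n/2` and `k = n/2 − 1` are spartan pairs for the `n`-cycle
`w = (1 2 ⋯ n)` (zero-indexed: `finRotate n`): both components are involutions whose
product is `w`, and `ℓ(w y_k) + ℓ(y_k) − ℓ(w)` attains the excess `e(w)`. -/
theorem spartan_pairs_of_cycle_even (n : ℕ) (hn : 2 ≤ n) (heven : Even n) :
    ((yk n (n / 2) (by omega)) ^ 2 = 1 ∧
      (finRotate n * yk n (n / 2) (by omega)) ^ 2 = 1 ∧
      finRotate n = (finRotate n * yk n (n / 2) (by omega)) * yk n (n / 2) (by omega) ∧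
      invNum (finRotate n * yk n (n / 2) (by omega)) + invNum (yk n (n / 2) (by omega))
        - invNum (finRotate n) = excess (finRotate n)) ∧
    ((yk n (n / 2 - 1) (by omega)) ^ 2 = 1 ∧
      (finRotate n * yk n (n / 2 - 1) (by omega)) ^ 2 = 1 ∧
      finRotate n = (finRotate n * yk n (n / 2 - 1) (by omega)) * yk n (n / 2 - 1) (by omega) ∧
      invNum (finRotate n * yk n (n / 2 - 1) (by omega)) + invNum (yk n (n / 2 - 1) (by omega))
        - invNum (finRotate n) = excess (finRotate n)) := by
  have hhalf : n = n / 2 + n / 2 := by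
    obtain ⟨r, rfl⟩ := heven
    omega
  refine ⟨⟨yk_sq _ _ _, finRotate_mul_yk_sq _ _ (by omega),
      finRotate_eq_finRotate_mul_yk_mul_yk _ _ _, ?_⟩,
    ⟨yk_sq _ _ _, finRotate_mul_yk_sq _ _ (by omega),
      finRotate_eq_finRotate_mul_yk_mul_yk _ _ _, ?_⟩⟩
  all_goals rw [finRotate_mul_yk _ _ (by omega), excess_finRotate hhalf (by omega)]
  simp only [invNum_yk, show n / 2 - 1 + 1 = n / 2 by omega, show n - n / 2 = n / 2 by omega,
    show n - (n / 2 - 1) = n / 2 + 1 by omega, show n - (n / 2 + 1) = n / 2 - 1 by omega]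
  congr 1
  ring
end

section
/- Let n ≥ 2 and let w = (1 2 ⋯ n) ∈ Sym(n). Then the excess of w is e(w) = ⌊(n−2)²/2⌋. -/
/-! If `w = x * y` with `x² = y² = 1`, then `x` conjugates `w` to `w⁻¹`, so `x` is a reflection
`i ↦ c - i` of the dihedral group of the `n`-gon and `y = x * w` is the reflection
`i ↦ (c - 1) - i`. The reflection `i ↦ c - i` reverses the two blocks `[0, c]` and `[c + 1, n - 1]`,
so it has `C(c + 1, 2) + C(n - 1 - c, 2)` inversions, and `ℓ(x) + ℓ(y) = c² + (n - 1 - c)²`.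
As `ℓ(w) = n - 1`, the excess is the minimum over `c` of `c² + (n - 1 - c)² - (n - 1)`, which is
attained at `c = ⌊(n - 1) / 2⌋`. -/

open Equiv Finset

theorem Nat.choose_two_add_succ_choose_two (a : ℕ) : a.choose 2 + (a + 1).choose 2 = a ^ 2 := by
  induction a with
  | zero => rfl
  | succ a ih =>
    rw [Nat.choose_succ_succ' (a + 1) 1, Nat.choose_one_right]
    linarith [Nat.choose_succ_succ' a 1, Nat.choose_one_right a]

theorem Nat.add_sub_one_sq_div_two_le (a b : ℕ) :
    (a + b - 1) ^ 2 / 2 ≤ a ^ 2 + b ^ 2 - (a + b) := by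
  rcases Nat.eq_zero_or_pos (a + b) with h | h
  · simp [h]
  rw [Nat.div_le_iff_le_mul_add_pred two_pos]
  have ha : a ≤ a ^ 2 := Nat.le_self_pow two_ne_zero a
  have hb : b ≤ b ^ 2 := Nat.le_self_pow two_ne_zero b
  zify [h, ha, hb, Nat.add_le_add ha hb]
  push_cast
  nlinarith [sq_nonneg ((a : ℤ) - b)]

theorem Nat.div_two_sq_add_sub_div_two_sq_sub (k : ℕ) :
    (k / 2) ^ 2 + (k - k / 2) ^ 2 - k = (k - 1) ^ 2 / 2 := by
  obtain ⟨j, rfl | rfl⟩ := Nat.even_or_odd' k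
  · rcases j with _ | j
    · rfl
    · rw [show 2 * (j + 1) / 2 = j + 1 by omega, show 2 * (j + 1) - (j + 1) = j + 1 by omega,
        show 2 * (j + 1) - 1 = 2 * j + 1 by omega,
        show (2 * j + 1) ^ 2 = 2 * (2 * j ^ 2 + 2 * j) + 1 by ring, Nat.mul_add_div two_pos]
      zify [show 2 * (j + 1) ≤ (j + 1) ^ 2 + (j + 1) ^ 2 by nlinarith]
      push_cast
      ring
  · rw [show (2 * j + 1) / 2 = j by omega, show 2 * j + 1 - j = j + 1 by omega,
      Nat.add_sub_cancel, show (2 * j) ^ 2 = 2 * (2 * j ^ 2) by ring,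
      Nat.mul_div_cancel_left _ two_pos]
    zify [show 2 * j + 1 ≤ j ^ 2 + (j + 1) ^ 2 by nlinarith]
    ring

theorem Equiv.subLeft_sq {G : Type*} [AddCommGroup G] (a : G) : Equiv.subLeft a ^ 2 = 1 := by
  ext x
  simp [sq]

section Cycle

variable {n : ℕ}

open Fin.CommRing in
theorem Fin.eq_sub_of_apply_add_one {f : Fin (n + 1) → Fin (n + 1)}
    (h : ∀ i, f (i + 1) = f i - 1) (i : Fin (n + 1)) : f i = f 0 - i := by
  rw [← Fin.cast_val_eq_self i]
  induction i.val with
  | zero => simp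
  | succ k ih => rw [Nat.cast_succ, h, ih, sub_sub]

theorem Fin.sub_lt_sub_iff_of_lt {c i j : Fin (n + 1)} (hij : i < j) :
    c - j < c - i ↔ j ≤ c ∨ c < i := by
  have hval : ∀ a b : Fin (n + 1),
      ((a - b : Fin (n + 1)) : ℕ) = if b ≤ a then (a : ℕ) - b else n + 1 + a - b := by
    intro a b
    split_ifs with h
    · exact Fin.coe_sub_iff_le.2 h
    · exact Fin.coe_sub_iff_lt.2 (not_le.1 h)
  rw [Fin.lt_def] at hij
  simp only [Fin.lt_def, Fin.le_def, hval]
  split_ifs <;> omega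

theorem subLeft_mul_subLeft_sub_one (c : Fin (n + 1)) :
    Equiv.subLeft c * Equiv.subLeft (c - 1) = finRotate (n + 1) := by
  refine Equiv.ext fun i => ?_
  simp only [Perm.mul_apply, subLeft_apply, finRotate_apply]
  abel

theorem eq_subLeft_of_finRotate_eq_mul {x y : Perm (Fin (n + 1))} (hx : x ^ 2 = 1)
    (hy : y ^ 2 = 1) (hxy : finRotate (n + 1) = x * y) :
    x = Equiv.subLeft (x 0) ∧ y = Equiv.subLeft (x 0 - 1) := by
  have hxx : ∀ i, x (x i) = i := fun i => by rw [← Perm.mul_apply, ← sq, hx, Perm.one_apply]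
  have hyy : ∀ i, y (y i) = i := fun i => by rw [← Perm.mul_apply, ← sq, hy, Perm.one_apply]
  have hyx : ∀ i, y i = x (i + 1) := fun i => by
    rw [← finRotate_apply, hxy, Perm.mul_apply, hxx]
  have hstep : ∀ i, x (i + 1) = x i - 1 := fun i => by
    have := congrArg x (hyy i)
    rw [hyx, hyx, hxx] at this
    exact eq_sub_of_add_eq this
  have hxi := Fin.eq_sub_of_apply_add_one hstep
  refine ⟨Equiv.ext hxi, Equiv.ext fun i => ?_⟩
  rw [hyx, hxi, subLeft_apply]
  abel

theorem invNum_finRotate : invNum (finRotate (n + 1)) = n := by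
  have hinv : ({p | p.1 < p.2 ∧ finRotate (n + 1) p.2 < finRotate (n + 1) p.1} :
      Finset (Fin (n + 1) × Fin (n + 1))) = Iio (Fin.last n) ×ˢ {Fin.last n} := by
    ext ⟨i, j⟩
    simp only [mem_filter, mem_univ, true_and, mem_product, mem_Iio, mem_singleton,
      finRotate_apply, Fin.lt_def, Fin.ext_iff, Fin.val_add_one, Fin.val_last]
    split_ifs <;> omega
  rw [invNum, hinv, card_product, Fin.card_Iio, card_singleton, Fin.val_last, mul_one]

theorem invNum_subLeft (c : Fin (n + 1)) :
    invNum (Equiv.subLeft c) = (c + 1 : ℕ).choose 2 + (n - c).choose 2 := by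
  have hinv : ({p | p.1 < p.2 ∧ Equiv.subLeft c p.2 < Equiv.subLeft c p.1} :
      Finset (Fin (n + 1) × Fin (n + 1))) =
      {p ∈ Iic c ×ˢ Iic c | p.1 < p.2} ∪ {p ∈ Ioi c ×ˢ Ioi c | p.1 < p.2} := by
    ext ⟨i, j⟩
    simp only [mem_filter, mem_univ, true_and, mem_union, mem_product, mem_Iic, mem_Ioi,
      subLeft_apply]
    constructor
    · rintro ⟨hij, h⟩
      rcases (Fin.sub_lt_sub_iff_of_lt hij).1 h with h | h
      · exact Or.inl ⟨⟨hij.le.trans h, h⟩, hij⟩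
      · exact Or.inr ⟨⟨h, h.trans hij⟩, hij⟩
    · rintro (⟨⟨-, h⟩, hij⟩ | ⟨⟨h, -⟩, hij⟩)
      · exact ⟨hij, (Fin.sub_lt_sub_iff_of_lt hij).2 (Or.inl h)⟩
      · exact ⟨hij, (Fin.sub_lt_sub_iff_of_lt hij).2 (Or.inr h)⟩
  have hdisj : Disjoint {p ∈ Iic c ×ˢ Iic c | p.1 < p.2} {p ∈ Ioi c ×ˢ Ioi c | p.1 < p.2} :=
    disjoint_filter_filter <| disjoint_product.2 <| Or.inl <|
      disjoint_left.2 fun _ hi hi' => not_lt.2 (mem_Iic.1 hi) (mem_Ioi.1 hi')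
  rw [invNum, hinv, card_union_of_disjoint hdisj, card_product_filter_lt,
    card_product_filter_lt, Fin.card_Iic, Fin.card_Ioi]
  rfl

theorem invNum_subLeft_add_invNum_subLeft_sub_one (c : Fin (n + 1)) :
    invNum (Equiv.subLeft c) + invNum (Equiv.subLeft (c - 1)) = (c : ℕ) ^ 2 + (n - c) ^ 2 := by
  rw [invNum_subLeft, invNum_subLeft, Fin.coe_sub_one]
  split_ifs with hc
  · simp [hc, add_comm, Nat.choose_two_add_succ_choose_two]
  · obtain ⟨a, ha⟩ : ∃ a, (c : ℕ) = a + 1 :=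
      Nat.exists_eq_succ_of_ne_zero (Fin.val_ne_zero_iff.2 hc)
    obtain ⟨b, hb⟩ : ∃ b, n - a = b + 1 := Nat.exists_eq_succ_of_ne_zero (by omega)
    rw [ha, Nat.add_sub_cancel, hb, show n - (a + 1) = b by omega,
      ← Nat.choose_two_add_succ_choose_two (a + 1), ← Nat.choose_two_add_succ_choose_two b]
    omega

end Cycle

theorem excess_finRotate_s10 (n : ℕ) :
    excess (finRotate (n + 1)) = ⨅ c : Fin (n + 1), ((c : ℕ) ^ 2 + (n - c) ^ 2 - n) := by
  rw [excess, invNum_finRotate]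
  congr 1
  ext m
  constructor
  · rintro ⟨x, y, hx, hy, hxy, rfl⟩
    obtain ⟨hx', hy'⟩ := eq_subLeft_of_finRotate_eq_mul hx hy hxy
    exact ⟨x 0, by rw [congrArg invNum hx', congrArg invNum hy',
      invNum_subLeft_add_invNum_subLeft_sub_one]⟩
  · rintro ⟨c, rfl⟩
    exact ⟨_, _, Equiv.subLeft_sq c, Equiv.subLeft_sq (c - 1),
      (subLeft_mul_subLeft_sub_one c).symm, by rw [invNum_subLeft_add_invNum_subLeft_sub_one]⟩

/-- **Hart–Rowley, Proposition 2.8(iv).** The excess of the `n`-cycle `w = (1 2 ⋯ n)`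
(zero-indexed: `finRotate n`) is `⌊(n−2)²/2⌋`. -/
theorem excess_of_cycle (n : ℕ) (hn : 2 ≤ n) :
    excess (finRotate n) = (n - 2) ^ 2 / 2 := by
  obtain ⟨k, rfl⟩ : ∃ k, n = k + 1 := ⟨n - 1, by omega⟩
  rw [excess_finRotate_s10, Nat.add_sub_add_right k 1 1]
  apply le_antisymm
  · exact (ciInf_le' _ (⟨k / 2, by omega⟩ : Fin (k + 1))).trans_eq
      (Nat.div_two_sq_add_sub_div_two_sq_sub k)
  · exact le_ciInf fun c => by
      simpa [Nat.add_sub_cancel' c.is_le] using Nat.add_sub_one_sq_div_two_le c (k - c)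
end
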